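/- arXiv:2005.04633 — 6 statements merged into one kernel-verified Lean document; each statement's English description precedes it below -/
import Mathlib

section
/- Let f ∈ ℤ[x] be nonconstant, let ρ ∈ ℚ be a root bound for f (i.e. every complex root α of f satisfies |α| ≤ ρ), and let Δ ≥ 1 be a factor degree lower bound for f (i.e. in every factorization f = g·h with g, h ∈ ℤ[x] both nonconstant, one has deg g ≥ Δ and deg h ≥ Δ). Suppose there exists n ∈ ℤ with |n| > 1 + ρ such that |f(n)| = s·p, where p is a prime number and s is a positive integer with s < (|n| − ρ)^Δ. Then f admits no factorization f = g·h with g, h ∈ ℤ[x] both nonconstant; equivalently, f is irreducible in ℚ[x]. -/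
/-!
Over ℂ, `g = lc(g) ∏ (X - α)` with `|lc(g)| ≥ 1` and every `|α| ≤ ρ`, so `|g(n)| ≥ (|n| - ρ)^deg g`.
If `f = g h` with both factors nonconstant, both have degree `≥ Δ`, so `|g(n)|, |h(n)| > s`.
But `|g(n) h(n)| = s p` and `p` divides one factor, say `g(n)`; then `|h(n)| ≤ s`.
Gauss's lemma, applied to the primitive part of `f`, turns this into irreducibility over `ℚ`.
-/

open Polynomial

theorem Int.abs_le_or_abs_le_of_abs_mul_eq_mul_prime {a b s : ℤ} {p : ℕ} (hp : p.Prime)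
    (h : |a * b| = s * p) : |a| ≤ s ∨ |b| ≤ s := by
  have hp0 : (0 : ℤ) < p := by exact_mod_cast hp.pos
  have hs : 0 ≤ s := nonneg_of_mul_nonneg_left (h ▸ abs_nonneg _) hp0
  have key {a b : ℤ} (h : |a * b| = s * p) (hpa : (p : ℤ) ∣ a) : |a| ≤ s ∨ |b| ≤ s := by
    rcases eq_or_ne a 0 with rfl | ha
    · exact .inl (by simpa using hs)
    · have hpa' : (p : ℤ) ≤ |a| := Int.le_of_dvd (abs_pos.2 ha) ((dvd_abs _ _).2 hpa)
      rw [abs_mul] at h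
      exact .inr (le_of_mul_le_mul_left (by nlinarith [abs_nonneg b]) hp0)
  have hdvd : (p : ℤ) ∣ a * b := by rw [← dvd_abs, h]; exact dvd_mul_left _ _
  rcases (Nat.prime_iff_prime_int.mp hp).dvd_or_dvd hdvd with hpa | hpb
  · exact key h hpa
  · exact (key (by rwa [mul_comm]) hpb).symm

namespace Polynomial

theorem norm_leadingCoeff_mul_pow_le_norm_eval {k : Type*} [NormedField k] [IsAlgClosed k]
    {p : k[X]} {ρ : ℝ} (hroots : ∀ α ∈ p.roots, ‖α‖ ≤ ρ) {z : k} (hz : ρ ≤ ‖z‖) :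
    ‖p.leadingCoeff‖ * (‖z‖ - ρ) ^ p.natDegree ≤ ‖p.eval z‖ := by
  have hcard : p.roots.card = p.natDegree := IsAlgClosed.card_roots_eq_natDegree
  have heval : ‖p.eval z‖ = ‖p.leadingCoeff‖ * (p.roots.map fun α => ‖z - α‖).prod := by
    conv_lhs => rw [← C_leadingCoeff_mul_prod_multiset_X_sub_C hcard]
    have hnorm (m : Multiset k) : ‖m.prod‖ = (m.map (‖·‖)).prod := map_multiset_prod normHom m
    rw [eval_mul, eval_C, eval_multiset_prod, norm_mul, hnorm, Multiset.map_map, Multiset.map_map]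
    simp [Function.comp_def]
  have hprod : (‖z‖ - ρ) ^ p.natDegree ≤ (p.roots.map fun α => ‖z - α‖).prod := by
    rw [← hcard, ← Multiset.prod_replicate, ← Multiset.map_const']
    refine Multiset.prod_map_le_prod_map₀ _ _ (fun _ _ => sub_nonneg.2 hz) fun α hα => ?_
    linarith [hroots α hα, norm_sub_norm_le z α]
  rw [heval]
  gcongr

theorem pow_natDegree_le_abs_eval_int {g : ℤ[X]} (hg : g ≠ 0) {ρ : ℝ}
    (hroots : ∀ α : ℂ, aeval α g = 0 → ‖α‖ ≤ ρ) {n : ℤ} (hn : ρ ≤ |(n : ℝ)|) :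
    (|(n : ℝ)| - ρ) ^ g.natDegree ≤ |((g.eval n : ℤ) : ℝ)| := by
  have hinj : Function.Injective (algebraMap ℤ ℂ) := RingHom.injective_int _
  have hroots' : ∀ α ∈ (g.map (algebraMap ℤ ℂ)).roots, ‖α‖ ≤ ρ := fun α hα =>
    hroots α ((mem_roots_map_of_injective hinj hg).1 hα)
  have hbound := norm_leadingCoeff_mul_pow_le_norm_eval hroots' (z := (n : ℂ))
    (by rwa [Complex.norm_intCast])
  rw [leadingCoeff_map_of_injective hinj, natDegree_map_eq_of_injective hinj,
    eval_intCast_map] at hbound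
  have hlc : (1 : ℝ) ≤ |(g.leadingCoeff : ℝ)| := by
    exact_mod_cast Int.one_le_abs (leadingCoeff_ne_zero.2 hg)
  simp only [algebraMap_int_eq, eq_intCast, Complex.norm_intCast] at hbound
  exact (le_mul_of_one_le_left (pow_nonneg (sub_nonneg.2 hn) _) hlc).trans hbound

variable {R K : Type*} [CommRing R] [IsDomain R] [NormalizedGCDMonoid R]

theorem irreducible_primPart_of_forall_natDegree_eq_zero {f : R[X]} (hf : 0 < f.natDegree)
    (hfac : ∀ g h : R[X], f = g * h → g.natDegree = 0 ∨ h.natDegree = 0) :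
    Irreducible f.primPart := by
  have hprim := f.isPrimitive_primPart
  have hunit {q : R[X]} (hq : q ∣ f.primPart) (hq0 : q.natDegree = 0) : IsUnit q := by
    obtain ⟨r, rfl⟩ := natDegree_eq_zero.mp hq0
    exact isUnit_C.mpr (isPrimitive_iff_isUnit_of_C_dvd.mp hprim r hq)
  refine ⟨fun hu => ?_, fun a b hab => ?_⟩
  · have := natDegree_eq_zero_of_isUnit hu
    rw [natDegree_primPart] at this
    omega
  · have hc : f.content ≠ 0 := content_eq_zero_iff.not.mpr (ne_zero_of_natDegree_gt hf)
    have hfab : f = (C f.content * a) * b := by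
      rw [mul_assoc, ← hab, ← eq_C_content_mul_primPart]
    rcases hfac _ _ hfab with ha | hb
    · rw [natDegree_C_mul hc] at ha
      exact .inl (hunit (Dvd.intro b hab.symm) ha)
    · exact .inr (hunit (Dvd.intro_left a hab.symm) hb)

theorem irreducible_map_of_forall_natDegree_eq_zero [Field K] [Algebra R K] [IsFractionRing R K]
    {f : R[X]} (hf : 0 < f.natDegree)
    (hfac : ∀ g h : R[X], f = g * h → g.natDegree = 0 ∨ h.natDegree = 0) :
    Irreducible (f.map (algebraMap R K)) := by
  have hc : IsUnit (C (algebraMap R K f.content)) := by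
    refine isUnit_C.mpr (isUnit_iff_ne_zero.mpr ?_)
    exact (map_ne_zero_iff _ (IsFractionRing.injective R K)).mpr
      (content_eq_zero_iff.not.mpr (ne_zero_of_natDegree_gt hf))
  rw [eq_C_content_mul_primPart f, Polynomial.map_mul, map_C, irreducible_isUnit_mul hc]
  exact f.isPrimitive_primPart.irreducible_iff_irreducible_map_fraction_map.mp
    (irreducible_primPart_of_forall_natDegree_eq_zero hf hfac)

end Polynomial

theorem stmt0_general (f : Polynomial ℤ) (hf : 1 ≤ f.natDegree)
    (ρ : ℚ) (hρ : ∀ α : ℂ, Polynomial.aeval α f = 0 → ‖α‖ ≤ (ρ : ℝ))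
    (Δ : ℕ)
    (hΔ : ∀ g h : Polynomial ℤ, f = g * h → 1 ≤ g.natDegree → 1 ≤ h.natDegree →
      Δ ≤ g.natDegree ∧ Δ ≤ h.natDegree)
    (n : ℤ) (hn : ((|n| : ℤ) : ℚ) > 1 + ρ)
    (s : ℤ) (p : ℕ) (hp : Nat.Prime p)
    (hval : |f.eval n| = s * (p : ℤ))
    (hsmall : (s : ℚ) < (((|n| : ℤ) : ℚ) - ρ) ^ Δ) :
    (∀ g h : Polynomial ℤ, f = g * h → g.natDegree = 0 ∨ h.natDegree = 0) ∧
      Irreducible (f.map (Int.castRingHom ℚ)) := by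
  have hnρ : (1 : ℝ) < |(n : ℝ)| - ρ := by
    have : (1 : ℝ) + ρ < |(n : ℝ)| := by exact_mod_cast hn
    linarith
  have hsR : (s : ℝ) < (|(n : ℝ)| - ρ) ^ Δ := by exact_mod_cast hsmall
  have hs_lt {g : ℤ[X]} (hgf : g ∣ f) (hΔg : Δ ≤ g.natDegree) : s < |g.eval n| := by
    have hg0 : g ≠ 0 := ne_zero_of_dvd_ne_zero (ne_zero_of_natDegree_gt hf) hgf
    have hbound := pow_natDegree_le_abs_eval_int hg0
      (fun α hα => hρ α (aeval_eq_zero_of_dvd_aeval_eq_zero hgf hα)) (n := n) (by linarith)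
    have : (s : ℝ) < |((g.eval n : ℤ) : ℝ)| :=
      hsR.trans_le ((pow_le_pow_right₀ hnρ.le hΔg).trans hbound)
    exact_mod_cast this
  have hfac (g h : ℤ[X]) (hfgh : f = g * h) : g.natDegree = 0 ∨ h.natDegree = 0 := by
    by_contra! hdeg
    obtain ⟨hΔg, hΔh⟩ := hΔ g h hfgh (by omega) (by omega)
    have hgh : |g.eval n * h.eval n| = s * p := by rw [← eval_mul, ← hfgh, hval]
    rcases Int.abs_le_or_abs_le_of_abs_mul_eq_mul_prime hp hgh with hg | hh
    · exact (hs_lt (Dvd.intro h hfgh.symm) hΔg).not_ge hg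
    · exact (hs_lt (Dvd.intro_left g hfgh.symm) hΔh).not_ge hh
  exact ⟨hfac, irreducible_map_of_forall_natDegree_eq_zero hf hfac⟩

/-- **Large prime factor witness criterion.**
If `f ∈ ℤ[x]` is nonconstant, `ρ` is a root bound, `Δ` a factor degree lower bound,
and `|f(n)| = s * p` with `p` prime and `0 < s < (|n| - ρ)^Δ` for some `n` with
`|n| > 1 + ρ`, then `f` has no factorization into two nonconstant integer polynomials;
equivalently `f` is irreducible in `ℚ[x]`. -/
theorem stmt0 (f : Polynomial ℤ) (hf : 1 ≤ f.natDegree)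
    (ρ : ℚ) (hρ : ∀ α : ℂ, Polynomial.aeval α f = 0 → ‖α‖ ≤ (ρ : ℝ))
    (Δ : ℕ) (hΔ1 : 1 ≤ Δ)
    (hΔ : ∀ g h : Polynomial ℤ, f = g * h → 1 ≤ g.natDegree → 1 ≤ h.natDegree →
      Δ ≤ g.natDegree ∧ Δ ≤ h.natDegree)
    (n : ℤ) (hn : ((|n| : ℤ) : ℚ) > 1 + ρ)
    (s : ℤ) (hs : 0 < s) (p : ℕ) (hp : Nat.Prime p)
    (hval : |f.eval n| = s * (p : ℤ))
    (hsmall : (s : ℚ) < (((|n| : ℤ) : ℚ) - ρ) ^ Δ) :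
    (∀ g h : Polynomial ℤ, f = g * h → g.natDegree = 0 ∨ h.natDegree = 0) ∧
      Irreducible (f.map (Int.castRingHom ℚ)) :=
  stmt0_general f hf ρ hρ Δ hΔ n hn s p hp hval hsmall
end

section
/- Let M = [[a,b],[c,d]] be a 2×2 integer matrix with determinant D = ad − bc ≠ 0, and let f ∈ ℤ[x] be nonzero. If deg(μ_M(f)) = deg f, then μ_{M^{adj}}(μ_M(f)) = D^{deg f} · f, where M^{adj} = [[d,−b],[−c,a]] is the classical adjoint of M. -/
/-!
Let `F(x, y) = Σ f_j x^j y^(n-j)` be the degree-`n` homogenization of `f`, `n = deg f`. Then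
`μ_M(f)(x) = F(ax + b, cx + d)`, and since `μ_M(f)` still has degree `n`, its degree-`n`
homogenization is the form `F(ax + by, cx + dy)`. Applying `μ_{M^adj}` therefore evaluates `F`
at `M · M^adj · (x, 1) = D · (x, 1)`, and homogeneity pulls out the factor `D^n`.
-/

/-- The Möbius transform of `f` induced by the matrix `[[a,b],[c,d]]`:
`μ_M(f) = Σ_{j≤n} f_j (ax+b)^j (cx+d)^(n-j)` where `n = deg f`. -/
noncomputable def mobius (a b c d : ℤ) (f : Polynomial ℤ) : Polynomial ℤ :=
  ∑ j ∈ Finset.range (f.natDegree + 1),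
    Polynomial.C (f.coeff j) * (Polynomial.C a * Polynomial.X + Polynomial.C b) ^ j *
      (Polynomial.C c * Polynomial.X + Polynomial.C d) ^ (f.natDegree - j)

theorem MvPolynomial.IsHomogeneous.aeval_mul_left {σ R S : Type*} [CommSemiring R]
    [CommSemiring S] [Algebra R S] {φ : MvPolynomial σ R} {n : ℕ} (hφ : φ.IsHomogeneous n)
    (r : S) (x : σ → S) :
    MvPolynomial.aeval (fun i ↦ r * x i) φ = r ^ n * MvPolynomial.aeval x φ := by
  conv_lhs => rw [φ.as_sum]
  conv_rhs => rw [φ.as_sum]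
  simp only [map_sum, Finset.mul_sum, MvPolynomial.aeval_monomial]
  refine Finset.sum_congr rfl fun m hm ↦ ?_
  have hdeg : ∑ i ∈ m.support, m i = n := by
    rw [← hφ (MvPolynomial.mem_support_iff.mp hm), Finsupp.weight_apply, Finsupp.sum]
    simp
  simp only [mul_pow, Finsupp.prod, Finset.prod_mul_distrib, Finset.prod_pow_eq_pow_sum, hdeg]
  ring

open Polynomial

noncomputable def linearSubst {R : Type*} [CommSemiring R] (a b c d : R) :
    Fin 2 → MvPolynomial (Fin 2) R :=
  ![.C a * .X 0 + .C b * .X 1, .C c * .X 0 + .C d * .X 1]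

theorem isHomogeneous_linearSubst {R : Type*} [CommSemiring R] (a b c d : R) (i : Fin 2) :
    (linearSubst a b c d i).IsHomogeneous 1 := by
  fin_cases i <;>
    exact (MvPolynomial.isHomogeneous_C_mul_X _ _).add (MvPolynomial.isHomogeneous_C_mul_X _ _)

theorem mobius_eq_aeval_homogenize (a b c d : ℤ) (f : ℤ[X]) :
    mobius a b c d f =
      MvPolynomial.aeval ![C a * X + C b, C c * X + C d] (f.homogenize f.natDegree) := by
  rw [mobius, homogenize, Finset.Nat.sum_antidiagonal_eq_sum_range_succ_mk, map_sum]
  refine Finset.sum_congr rfl fun j _ ↦ ?_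
  simp [MvPolynomial.aeval_monomial, Finsupp.prod_fintype, mul_assoc]

theorem homogenize_mobius (a b c d : ℤ) (f : ℤ[X]) :
    (mobius a b c d f).homogenize f.natDegree =
      MvPolynomial.bind₁ (linearSubst a b c d) (f.homogenize f.natDegree) := by
  refine homogenize_eq_of_isHomogeneous ?_ ?_
  · have h := (isHomogeneous_homogenize (n := f.natDegree) f).aeval _
      (isHomogeneous_linearSubst a b c d)
    rwa [one_mul] at h
  · rw [MvPolynomial.aeval_bind₁, mobius_eq_aeval_homogenize]
    congr 1
    ext i : 1
    fin_cases i <;> simp [linearSubst]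

theorem stmt6_general (a b c d : ℤ) (f : Polynomial ℤ)
    (hdeg : (mobius a b c d f).natDegree = f.natDegree) :
    mobius d (-b) (-c) a (mobius a b c d f) =
      Polynomial.C ((a * d - b * c) ^ f.natDegree) * f := by
  have hadjugate : (fun i ↦ MvPolynomial.aeval ![C d * X + C (-b), C (-c) * X + C a]
      (linearSubst a b c d i)) = fun i ↦ C (a * d - b * c) * ![X, 1] i := by
    ext i : 1
    fin_cases i <;> simp [linearSubst] <;> ring
  rw [mobius_eq_aeval_homogenize, hdeg, homogenize_mobius, MvPolynomial.aeval_bind₁, hadjugate,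
    (isHomogeneous_homogenize f).aeval_mul_left, aeval_homogenize_X_one f le_rfl, C_pow]

/-- If `det M ≠ 0` and `deg(μ_M(f)) = deg f`, then applying the pseudo-inverse
(the Möbius transform for the classical adjoint `[[d,-b],[-c,a]]`)
recovers `D^(deg f) · f` where `D = det M`. -/
theorem stmt6 (a b c d : ℤ) (hdet : a * d - b * c ≠ 0) (f : Polynomial ℤ) (hf : f ≠ 0)
    (hdeg : (mobius a b c d f).natDegree = f.natDegree) :
    mobius d (-b) (-c) a (mobius a b c d f) =
      Polynomial.C ((a * d - b * c) ^ f.natDegree) * f :=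
  stmt6_general a b c d f hdeg
end

section
/- Let f ∈ ℤ[x] be nonzero of degree d. Then the fixed divisor of f equals the gcd of f evaluated at any d+1 consecutive integers: gcd{ f(n) : n ∈ ℤ } = gcd( f(0), f(1), …, f(d) ). -/
/-!
If `deg f ≤ d`, the `(d+1)`-st forward difference of `n ↦ f(n)` vanishes, so by the
Gregory–Newton formula every value `f(a + n)`, `n ∈ ℕ`, is an integral combination of the
differences `Δᵏ f(a)`, `k ≤ d`, which are themselves integral combinations of
`f(a), …, f(a + d)`. Applied to `f(x)` at `a = 0` and to `f(-x)` at `a = -d` (the window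
`0, …, d` is symmetric), any common divisor of `f(0), …, f(d)` divides every `f(n)`.
-/

open Polynomial fwdDiff

theorem AddSubgroup.shift_mem_of_fwdDiff_iter_eq_zero {M G : Type*} [AddCommMonoid M]
    [AddCommGroup G] (S : AddSubgroup G) {h : M} {f : M → G} {d : ℕ}
    (hf : Δ_[h] ^[d + 1] f = 0) {y : M} (hS : ∀ i ≤ d, f (y + i • h) ∈ S) (n : ℕ) :
    f (y + n • h) ∈ S := by
  have hdiff : ∀ k, Δ_[h] ^[k] f y ∈ S := by
    intro k
    rcases le_or_gt k d with hk | hk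
    · rw [fwdDiff_iter_eq_sum_shift]
      exact S.sum_mem fun j hj => S.zsmul_mem (hS j (by grind)) _
    · obtain ⟨j, rfl⟩ := Nat.exists_eq_add_of_lt hk
      rw [show d + j + 1 = j + (d + 1) by ring, Function.iterate_add_apply, hf]
      rw [Function.iterate_fixed (f := Δ_[h]) (x := (0 : M → G)) (fwdDiff_const h 0)]
      exact S.zero_mem
  rw [shift_eq_sum_fwdDiff_iter h f n y]
  exact S.sum_mem fun k _ => S.nsmul_mem (hdiff k) _

theorem Polynomial.dvd_eval_add_natCast_of_dvd_eval_add {R : Type*} [CommRing R] {f : R[X]}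
    {d : ℕ} (hf : f.natDegree ≤ d) {m a : R} (h : ∀ i ≤ d, m ∣ f.eval (a + i)) (n : ℕ) :
    m ∣ f.eval (a + n) := by
  simp only [← Ideal.mem_span_singleton] at h ⊢
  simpa using (Ideal.span {m}).toAddSubgroup.shift_mem_of_fwdDiff_iter_eq_zero
    (fwdDiff_iter_eq_zero_of_degree_lt (Nat.lt_succ_of_le hf)) (y := a)
    (by simpa using h) n

theorem Polynomial.dvd_eval_intCast_of_dvd_eval_natCast {R : Type*} [CommRing R] {f : R[X]}
    {d : ℕ} (hf : f.natDegree ≤ d) {m : R} (h : ∀ i ≤ d, m ∣ f.eval (i : R)) (n : ℤ) :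
    m ∣ f.eval (n : R) := by
  obtain ⟨k, rfl | rfl⟩ := Int.eq_nat_or_neg n
  · simpa using dvd_eval_add_natCast_of_dvd_eval_add hf (a := 0) (by simpa using h) k
  · have hreflect : (f.comp (-X)).natDegree ≤ d :=
      (natDegree_eq_of_degree_eq degree_comp_neg_X).trans_le hf
    have hwindow : ∀ i ≤ d, m ∣ (f.comp (-X)).eval (-d + i) := fun i hi => by
      simpa [Nat.cast_sub hi, neg_add_eq_sub] using h (d - i) (Nat.sub_le d i)
    simpa using dvd_eval_add_natCast_of_dvd_eval_add hreflect hwindow (d + k)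

theorem stmt9_general (f : Polynomial ℤ) (d : ℕ) (hd : f.natDegree = d) :
    ∀ m : ℤ, (∀ n : ℤ, m ∣ f.eval n) ↔
      m ∣ (Finset.range (d + 1)).gcd (fun i => f.eval (i : ℤ)) := by
  intro m
  rw [Finset.dvd_gcd_iff]
  simp only [Finset.mem_range, Nat.lt_succ_iff]
  exact ⟨fun h i _ => h i, fun h n => by
    simpa using dvd_eval_intCast_of_dvd_eval_natCast hd.le h n⟩

/-- The fixed divisor of a nonzero `f ∈ ℤ[x]` of degree `d` equals
`gcd(f(0), f(1), …, f(d))`: an integer `m` divides all values `f(n)` iff `m`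
divides this finite gcd. -/
theorem stmt9 (f : Polynomial ℤ) (hf : f ≠ 0) (d : ℕ) (hd : f.natDegree = d) :
    ∀ m : ℤ, (∀ n : ℤ, m ∣ f.eval n) ↔
      m ∣ (Finset.range (d + 1)).gcd (fun i => f.eval (i : ℤ)) :=
  stmt9_general f d hd
end

section
/- Let f ∈ ℤ[x] be nonzero of degree d ≥ 1 with content 1 (the gcd of its coefficients is 1). Then the fixed divisor of f divides d!. -/
open Polynomial Finset

lemma lemA : ∀ n : ℕ, ∏ i ∈ Finset.range n, ((n : ℤ) - i) = n.factorial
  | 0 => by simp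
  | n + 1 => by
    rw [Finset.prod_range_succ' (fun i => ((n+1 : ℕ) : ℤ) - i)]
    push_cast
    have : ∏ i ∈ Finset.range n, ((n : ℤ) + 1 - (i + 1)) = ∏ i ∈ Finset.range n, ((n : ℤ) - i) := by
      apply Finset.prod_congr rfl; intro i _; ring
    rw [this, lemA n]
    push_cast [Nat.factorial_succ]
    ring

open Polynomial Finset

lemma lemB (j d : ℕ) (hj : j ≤ d) :
    ∏ i ∈ Finset.Ico (j+1) (d+1), ((j : ℤ) - i) = (-1)^(d-j) * (d-j).factorial := by
  rw [Finset.prod_Ico_eq_prod_range]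
  have h1 : d + 1 - (j + 1) = d - j := by omega
  rw [h1]
  have : ∀ k ∈ Finset.range (d - j), ((j:ℤ) - (j + 1 + k : ℕ)) = -((k:ℤ) + 1) := by
    intro k _; push_cast; ring
  rw [Finset.prod_congr rfl this]
  have : ∏ k ∈ Finset.range (d-j), (-((k:ℤ)+1)) = (-1)^(d-j) * ∏ k ∈ Finset.range (d-j), ((k:ℤ)+1) := by
    rw [show ((-1:ℤ)^(d-j)) = ∏ _k ∈ Finset.range (d-j), (-1:ℤ) by rw [Finset.prod_const, Finset.card_range], ← Finset.prod_mul_distrib]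
    apply Finset.prod_congr rfl; intro k _; ring
  rw [this]
  congr 1
  have := Finset.prod_range_add_one_eq_factorial (d - j)
  calc ∏ k ∈ Finset.range (d-j), ((k:ℤ)+1) = ((∏ k ∈ Finset.range (d-j), (k+1) : ℕ) : ℤ) := by push_cast; rfl
    _ = _ := by rw [this]

lemma erase_eq (d j : ℕ) (hj : j ≤ d) :
    (Finset.range (d+1)).erase j = Finset.range j ∪ Finset.Ico (j+1) (d+1) := by
  ext i
  simp only [Finset.mem_erase, Finset.mem_range, Finset.mem_union, Finset.mem_Ico]
  omega

open Polynomial Finset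

noncomputable def gp (d j : ℕ) : Polynomial ℤ :=
  ∏ i ∈ (Finset.range (d+1)).erase j, (Polynomial.X - Polynomial.C (i : ℤ))

lemma gp_natDegree_le (d j : ℕ) (hj : j ≤ d) : (gp d j).natDegree ≤ d := by
  unfold gp
  refine le_trans (Polynomial.natDegree_prod_le _ _) ?_
  calc ∑ i ∈ (Finset.range (d+1)).erase j, (Polynomial.X - Polynomial.C (i:ℤ)).natDegree
      ≤ ∑ _i ∈ (Finset.range (d+1)).erase j, 1 := by
        apply Finset.sum_le_sum; intro i _; exact le_of_eq (Polynomial.natDegree_X_sub_C _)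
    _ = ((Finset.range (d+1)).erase j).card := by simp
    _ ≤ d := by
      rw [Finset.card_erase_of_mem (by simp; omega)]; simp

lemma gp_eval_ne (d j m : ℕ) (hm : m < d+1) (hmj : m ≠ j) :
    (gp d j).eval (m : ℤ) = 0 := by
  unfold gp
  rw [Polynomial.eval_prod]
  apply Finset.prod_eq_zero (i := m)
  · simp [Finset.mem_erase, hmj, hm]
  · simp

lemma gp_eval_self (d j : ℕ) (hj : j ≤ d) :
    (gp d j).eval (j : ℤ) = (-1)^(d-j) * j.factorial * (d-j).factorial := by
  unfold gp
  rw [Polynomial.eval_prod]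
  simp only [Polynomial.eval_sub, Polynomial.eval_X, Polynomial.eval_intCast, Polynomial.eval_C]
  rw [erase_eq d j hj, Finset.prod_union]
  · rw [lemA j, lemB j d hj]; ring
  · rw [Finset.disjoint_left]; intro a ha hb
    simp only [Finset.mem_range] at ha
    simp only [Finset.mem_Ico] at hb
    omega
lemma key_identity (f : Polynomial ℤ) (d : ℕ) (hdeg : f.natDegree ≤ d) :
    Polynomial.C ((d.factorial : ℤ)) * f =
      ∑ j ∈ Finset.range (d+1),
        Polynomial.C ((-1)^(d-j) * (d.choose j : ℤ) * f.eval (j : ℤ)) * gp d j := by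
  set S := ∑ j ∈ Finset.range (d+1),
      Polynomial.C ((-1)^(d-j) * (d.choose j : ℤ) * f.eval (j : ℤ)) * gp d j with hS
  have hdegS : S.natDegree ≤ d := by
    apply Polynomial.natDegree_sum_le_of_forall_le
    intro j hj
    simp only [Finset.mem_range] at hj
    exact le_trans (Polynomial.natDegree_C_mul_le _ _) (gp_natDegree_le d j (by omega))
  have heval : ∀ m : ℕ, m < d + 1 → S.eval (m : ℤ) = (d.factorial : ℤ) * f.eval (m : ℤ) := by
    intro m hm
    rw [hS, Polynomial.eval_finset_sum]
    rw [Finset.sum_eq_single m]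
    · rw [Polynomial.eval_mul, Polynomial.eval_C, gp_eval_self d m (by omega)]
      have hc : (d.choose m : ℤ) * m.factorial * (d-m).factorial = d.factorial := by
        have := Nat.choose_mul_factorial_mul_factorial (show m ≤ d by omega)
        exact_mod_cast this
      have hs : ((-1:ℤ))^(d-m) * (-1:ℤ)^(d-m) = 1 := by
        rw [← pow_add]; exact (neg_one_pow_eq_one_iff_even (by norm_num)).2 (by exact Even.add_self _)
      calc (-1:ℤ)^(d-m) * (d.choose m : ℤ) * f.eval (m:ℤ) * ((-1)^(d-m) * m.factorial * (d-m).factorial)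
          = ((-1:ℤ)^(d-m) * (-1)^(d-m)) * ((d.choose m : ℤ) * m.factorial * (d-m).factorial) * f.eval (m:ℤ) := by ring
        _ = (d.factorial : ℤ) * f.eval (m:ℤ) := by rw [hs, hc, one_mul]
    · intro j hj hjm
      simp only [Finset.mem_range] at hj
      rw [Polynomial.eval_mul, gp_eval_ne d j m hm (fun h => hjm h.symm), mul_zero]
    · intro h
      exact absurd (Finset.mem_range.2 hm) h
  have hzero : Polynomial.C ((d.factorial : ℤ)) * f - S = 0 := by
    apply Polynomial.eq_zero_of_natDegree_lt_card_of_eval_eq_zero'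
      (s := (Finset.range (d+1)).image (Nat.cast : ℕ → ℤ))
    · intro i hi
      simp only [Finset.mem_image, Finset.mem_range] at hi
      obtain ⟨m, hm, rfl⟩ := hi
      rw [Polynomial.eval_sub, heval m hm, Polynomial.eval_mul, Polynomial.eval_C, sub_self]
    · rw [Finset.card_image_of_injective _ Nat.cast_injective, Finset.card_range]
      have h1 : (Polynomial.C ((d.factorial : ℤ)) * f - S).natDegree ≤ d :=
        le_trans (Polynomial.natDegree_sub_le _ _)
          (max_le (le_trans (Polynomial.natDegree_C_mul_le _ _) hdeg) hdegS)
      omega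
  exact sub_eq_zero.mp hzero
/-- If `f ∈ ℤ[x]` is nonzero of degree `d ≥ 1` with content `1`, then the fixed
divisor of `f` divides `d!`: every common divisor of all the values `f(n)` divides `d!`. -/
theorem stmt10 (f : Polynomial ℤ) (hf : f ≠ 0) (d : ℕ) (hd : f.natDegree = d)
    (hd1 : 1 ≤ d) (hc : f.content = 1) :
    ∀ δ : ℤ, (∀ n : ℤ, δ ∣ f.eval n) → δ ∣ (d.factorial : ℤ) := by
  intro δ hδ
  have hkey := key_identity f d (le_of_eq hd)
  -- δ divides every coefficient of C d! * f
  have hcoeff : ∀ i, δ ∣ (Polynomial.C ((d.factorial : ℤ)) * f).coeff i := by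
    intro i
    rw [hkey, Polynomial.finset_sum_coeff]
    apply Finset.dvd_sum
    intro j _
    rw [Polynomial.coeff_C_mul]
    exact Dvd.dvd.mul_right (Dvd.dvd.mul_left (hδ _) _) _
  -- hence δ divides the content of C d! * f, which is d!
  have hcont : δ ∣ (Polynomial.C ((d.factorial : ℤ)) * f).content := by
    apply Finset.dvd_gcd
    intro i _
    exact hcoeff i
  rwa [Polynomial.content_C_mul, hc, mul_one,
    Int.normalize_of_nonneg (by positivity)] at hcont
end

section
/- Let f ∈ ℤ[x] with f(0) ≠ 0, let q be a prime, let k be the multiplicity of q as a factor of f(0) (i.e. k is the largest integer with q^k dividing f(0)), and set g(x) = q^{−k}·f(q^k x). Then g has integer coefficients, and the fixed divisor of g equals δ / q^{v}, where δ is the fixed divisor of f and v is the multiplicity of q in δ. -/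
/-- Let `f ∈ ℤ[x]` with `f(0) ≠ 0`, `q` prime, `k` the multiplicity of `q` in `f(0)`,
and `g(x) = q^(-k) · f(q^k x)`. Then `g` has integer coefficients
(i.e. there is `g ∈ ℤ[x]` with `q^k · g = f(q^k x)`) and the fixed divisor of `g`
is `δ / q^v`, where `δ` is the fixed divisor of `f` and `v` the multiplicity of `q` in `δ`. -/
theorem stmt11 (f : Polynomial ℤ) (hf0 : f.eval 0 ≠ 0)
    (q : ℤ) (hq : Prime q) (k : ℕ)
    (hk1 : q ^ k ∣ f.eval 0) (hk2 : ¬ q ^ (k + 1) ∣ f.eval 0)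
    (δ : ℤ) (hδ0 : 0 ≤ δ)
    (hδ : ∀ m : ℤ, (∀ n : ℤ, m ∣ f.eval n) ↔ m ∣ δ)
    (v : ℕ) (hv1 : q ^ v ∣ δ) (hv2 : ¬ q ^ (v + 1) ∣ δ) :
    ∃ g : Polynomial ℤ,
      Polynomial.C (q ^ k) * g = f.comp (Polynomial.C (q ^ k) * Polynomial.X) ∧
      ∀ m : ℤ, (∀ n : ℤ, m ∣ g.eval n) ↔ m ∣ δ / q ^ v := by
  set c : ℤ := q ^ k with hc
  have hk1' : c ∣ f.coeff 0 := by rwa [Polynomial.coeff_zero_eq_eval_zero]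
  -- C c divides f.comp (C c * X)
  have hsplit : f.comp (Polynomial.C c * Polynomial.X)
      = (Polynomial.C c * Polynomial.X) * ((f.divX).comp (Polynomial.C c * Polynomial.X))
        + Polynomial.C (f.coeff 0) := by
    conv_lhs => rw [← Polynomial.X_mul_divX_add f]
    simp [Polynomial.add_comp, Polynomial.mul_comp]
  have hdvd : Polynomial.C c ∣ f.comp (Polynomial.C c * Polynomial.X) := by
    rw [hsplit]
    exact dvd_add ⟨Polynomial.X * ((f.divX).comp (Polynomial.C c * Polynomial.X)), by ring⟩
      (map_dvd Polynomial.C hk1')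
  obtain ⟨g, hg⟩ := hdvd
  refine ⟨g, hg.symm, ?_⟩
  have hδdvd : ∀ n : ℤ, δ ∣ f.eval n := (hδ δ).mpr dvd_rfl
  have hδf0 : δ ∣ f.eval 0 := hδdvd 0
  -- key eval identity : c * g.eval n = f.eval (c * n)
  have hev : ∀ n : ℤ, c * g.eval n = f.eval (c * n) := by
    intro n
    have := congrArg (Polynomial.eval n) hg.symm
    simpa [Polynomial.eval_comp] using this
  -- v ≤ k
  have hvk : v ≤ k := by
    by_contra h
    push_neg at h
    exact hk2 (dvd_trans (pow_dvd_pow q (by omega)) (hv1.trans hδf0))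
  set d : ℤ := δ / q ^ v with hd
  have hdδ : q ^ v * d = δ := Int.mul_ediv_cancel' hv1
  have hqd : ¬ q ∣ d := by
    intro h
    exact hv2 (by rw [pow_succ, ← hdδ]; exact mul_dvd_mul_left _ h)
  have hcop : IsCoprime d q := (hq.coprime_iff_not_dvd.mpr hqd).symm
  intro m
  constructor
  · intro hm
    -- q does not divide m
    have hqm : ¬ q ∣ m := by
      intro h
      apply hk2
      have h1 : q * c ∣ c * g.eval 0 := by
        rw [mul_comm q c]
        exact mul_dvd_mul_left c (h.trans (hm 0))
      rw [hev 0, mul_zero] at h1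
      calc q ^ (k + 1) = q * c := by rw [hc, pow_succ, mul_comm]
        _ ∣ f.eval 0 := h1
    have hmq : IsCoprime m q := (hq.coprime_iff_not_dvd.mpr hqm).symm
    have hmc : IsCoprime m c := hmq.pow_right
    -- m divides f.eval n for all n
    have hmf : ∀ n : ℤ, m ∣ f.eval n := by
      intro n
      obtain ⟨a, b, hab⟩ := hmc
      have key : m ∣ n - c * (b * n) := ⟨a * n, by linear_combination (-n) * hab⟩
      have h1 : m ∣ f.eval (c * (b * n)) := by
        rw [← hev]
        exact Dvd.dvd.mul_left (hm (b * n)) c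
      have h2 : m ∣ f.eval n - f.eval (c * (b * n)) :=
        key.trans (Polynomial.sub_dvd_eval_sub _ _ f)
      simpa using dvd_add h2 h1
    have hmδ : m ∣ δ := (hδ m).mp hmf
    exact (hmq.pow_right (n := v)).dvd_of_dvd_mul_left (by rwa [hdδ])
  · intro hm n
    refine hm.trans ?_
    have h1 : q ^ v * d ∣ q ^ v * (q ^ (k - v) * g.eval n) := by
      rw [hdδ, ← mul_assoc, ← pow_add]
      have hv : v + (k - v) = k := by omega
      rw [hv, ← hc, hev]
      exact hδdvd _
    have h2 : d ∣ q ^ (k - v) * g.eval n :=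
      (mul_dvd_mul_iff_left (pow_ne_zero v hq.ne_zero)).mp h1
    exact (hcop.pow_right).dvd_of_dvd_mul_left h2
end

section
/- Let f ∈ ℤ[x] be of degree d ≥ 2 with content 1, and let p₁, …, p_k be primes, none dividing the leading coefficient of f. Suppose that for every integer m with 1 ≤ m ≤ d/2 there exists an index i such that the reduction of f modulo p_i has no divisor of degree m in 𝔽_{p_i}[x]. Then f is irreducible in ℤ[x]. -/
/-- Soundness of irreducibility certification by factor degree analysis:
if `f ∈ ℤ[x]` has degree `d ≥ 2` and content `1`, and `p 1, …, p k` are primes not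
dividing the leading coefficient of `f` such that for every `m` with `1 ≤ m ≤ d/2`
some reduction `f mod p i` has no divisor of degree `m` in `𝔽_{p i}[x]`,
then `f` is irreducible in `ℤ[x]`. -/
theorem stmt13 (f : Polynomial ℤ) (d : ℕ) (hd : f.natDegree = d) (hd2 : 2 ≤ d)
    (hc : f.content = 1) (k : ℕ) (p : Fin k → ℕ) (hp : ∀ i, (p i).Prime)
    (hlc : ∀ i, ¬ ((p i : ℤ)) ∣ f.leadingCoeff)
    (hexcl : ∀ m : ℕ, 1 ≤ m → 2 * m ≤ d →
      ∃ i, ∀ u : Polynomial (ZMod (p i)),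
        u ∣ f.map (Int.castRingHom (ZMod (p i))) → u.natDegree ≠ m) :
    Irreducible f := by
  have hf0 : f ≠ 0 := by
    intro h; rw [h] at hd; simp at hd; omega
  have hprim : f.IsPrimitive := by
    rw [Polynomial.isPrimitive_iff_content_eq_one]; exact hc
  -- key : no factor of degree m with 1 ≤ m, 2m ≤ d
  have key : ∀ g : Polynomial ℤ, g ∣ f → 1 ≤ g.natDegree → 2 * g.natDegree ≤ d → False := by
    intro g hgf h1 h2
    obtain ⟨i, hi⟩ := hexcl g.natDegree h1 h2
    haveI : Fact (p i).Prime := ⟨hp i⟩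
    have hlcg : ¬ ((p i : ℤ)) ∣ g.leadingCoeff := fun h =>
      hlc i (h.trans (Polynomial.leadingCoeff_dvd_leadingCoeff hgf))
    have hne : (Int.castRingHom (ZMod (p i))) g.leadingCoeff ≠ 0 := by
      simpa [ZMod.intCast_zmod_eq_zero_iff_dvd] using hlcg
    have hdeg : (g.map (Int.castRingHom (ZMod (p i)))).natDegree = g.natDegree :=
      Polynomial.natDegree_map_of_leadingCoeff_ne_zero _ hne
    exact hi _ (Polynomial.map_dvd _ hgf) hdeg
  constructor
  · intro hu
    have := Polynomial.natDegree_eq_zero_of_isUnit hu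
    omega
  · intro a b hab
    by_contra hcon
    push_neg at hcon
    obtain ⟨hua, hub⟩ := hcon
    have ha0 : a ≠ 0 := by rintro rfl; simp at hab; exact hf0 hab
    have hb0 : b ≠ 0 := by rintro rfl; simp at hab; exact hf0 hab
    have hadeg : 1 ≤ a.natDegree := by
      by_contra h
      push_neg at h
      interval_cases h' : a.natDegree
      · have : a = Polynomial.C (a.coeff 0) := Polynomial.eq_C_of_natDegree_eq_zero h'
        have hdvd : Polynomial.C (a.coeff 0) ∣ f := this ▸ ⟨b, hab⟩
        exact hua (this ▸ Polynomial.isUnit_C.mpr (hprim _ hdvd))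
    have hbdeg : 1 ≤ b.natDegree := by
      by_contra h
      push_neg at h
      interval_cases h' : b.natDegree
      · have : b = Polynomial.C (b.coeff 0) := Polynomial.eq_C_of_natDegree_eq_zero h'
        have hdvd : Polynomial.C (b.coeff 0) ∣ f := this ▸ ⟨a, by rw [hab, mul_comm]⟩
        exact hub (this ▸ Polynomial.isUnit_C.mpr (hprim _ hdvd))
    have hsum : a.natDegree + b.natDegree = d := by
      rw [← hd, hab, Polynomial.natDegree_mul ha0 hb0]
    rcases le_total a.natDegree b.natDegree with h | h
    · exact key a ⟨b, hab⟩ hadeg (by omega)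
    · exact key b ⟨a, by rw [hab, mul_comm]⟩ hbdeg (by omega)
end
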